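/- Among the 3¹² = 531441 residue pairs (a,b) modulo 3⁶ for A(a,b) = (-3a²-36b²)(a⁴+36a²b²+432b⁴) and B(a,b) = 2a(a⁴+36a²b²+432b⁴)², exactly 177147 pairs satisfy both 3⁴ | A(a,b) and 3⁶ | B(a,b); these are precisely the pairs with 3 | a. Hence the local density 𝔡₃ equals 2/3. -/
import Mathlib

/-- `A(a,b) = (-3a² - 36b²)(a⁴ + 36a²b² + 432b⁴)`. -/
def Aent {R : Type*} [CommRing R] (a b : R) : R :=
  (-3 * a ^ 2 - 36 * b ^ 2) * (a ^ 4 + 36 * a ^ 2 * b ^ 2 + 432 * b ^ 4)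

/-- `B(a,b) = 2a·(a⁴ + 36a²b² + 432b⁴)²`. -/
def Bent {R : Type*} [CommRing R] (a b : R) : R :=
  2 * a * (a ^ 4 + 36 * a ^ 2 * b ^ 2 + 432 * b ^ 4) ^ 2

lemma map_Bent {R S : Type*} [CommRing R] [CommRing S] (f : R →+* S) (a b : R) :
    f (Bent a b) = Bent (f a) (f b) := by
  simp [Bent, map_mul, map_add, map_pow, map_ofNat]

lemma dvd3_iff (a : ZMod (3 ^ 6)) : (3 : ZMod (3 ^ 6)) ∣ a ↔ a.val % 3 = 0 := by
  constructor
  · rintro ⟨c, rfl⟩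
    rw [ZMod.val_mul]
    have h3 : ((3 : ZMod (3 ^ 6)).val) = 3 := by decide
    rw [h3, Nat.mod_mod_of_dvd _ (by norm_num : 3 ∣ 3 ^ 6)]
    exact Nat.mul_mod_right 3 _
  · intro h
    obtain ⟨k, hk⟩ := Nat.dvd_of_mod_eq_zero h
    refine ⟨(k : ZMod (3 ^ 6)), ?_⟩
    have h2 : ((a.val : ℕ) : ZMod (3 ^ 6)) = a := ZMod.natCast_zmod_val a
    rw [← h2, hk]
    push_cast
    ring

lemma key (p : ZMod (3 ^ 6) × ZMod (3 ^ 6)) :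
    ((3 ^ 4 : ZMod (3 ^ 6)) ∣ Aent p.1 p.2 ∧ Bent p.1 p.2 = 0) ↔
      (3 : ZMod (3 ^ 6)) ∣ p.1 := by
  obtain ⟨a, b⟩ := p
  constructor
  · rintro ⟨-, hB⟩
    have f := ZMod.castHom (by norm_num : (3:ℕ) ∣ 3 ^ 6) (ZMod 3)
    have hmap : Bent ((ZMod.castHom (by norm_num : (3:ℕ) ∣ 3 ^ 6) (ZMod 3)) a)
        ((ZMod.castHom (by norm_num : (3:ℕ) ∣ 3 ^ 6) (ZMod 3)) b) = 0 := by
      rw [← map_Bent]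
      simp [hB]
    have hz : ∀ x y : ZMod 3, Bent x y = 0 → x = 0 := by decide
    have ha0 := hz _ _ hmap
    rw [ZMod.castHom_apply, ← ZMod.natCast_val, ZMod.natCast_eq_zero_iff] at ha0
    exact (dvd3_iff a).mpr (by omega)
  · rintro ⟨c, rfl⟩
    constructor
    · refine ⟨(-(3*c^2) - 4*b^2) * 3 * (3*c^4 + 12*c^2*b^2 + 16*b^4), ?_⟩
      show Aent (3*c) b = _
      unfold Aent; ring
    · show Bent (3*c) b = 0
      have h : Bent (3*c) b = (3^6 : ZMod (3^6)) * (6 * c * (3*c^4 + 12*c^2*b^2 + 16*b^4)^2) := by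
        unfold Bent; ring
      have h0 : (3 ^ 6 : ZMod (3 ^ 6)) = 0 := by decide
      rw [h, h0, zero_mul]

lemma card_a : Nat.card {a : ZMod (3 ^ 6) // (3 : ZMod (3 ^ 6)) ∣ a} = 243 := by
  have e0 : {a : ZMod (3 ^ 6) // (3 : ZMod (3 ^ 6)) ∣ a} ≃
      {a : ZMod (3 ^ 6) // a.val % 3 = 0} :=
    Equiv.subtypeEquivRight fun a => dvd3_iff a
  have e : {a : ZMod (3 ^ 6) // a.val % 3 = 0} ≃ Fin 243 := by
    refine ⟨fun a => ⟨a.1.val / 3, ?_⟩,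
      fun k => ⟨((3 * (k : ℕ) : ℕ) : ZMod (3 ^ 6)), ?_⟩, ?_, ?_⟩
    · have h := a.1.val_lt
      have : (3 : ℕ) ^ 6 = 729 := by norm_num
      omega
    · rw [ZMod.val_natCast, Nat.mod_mod_of_dvd _ (by norm_num : 3 ∣ 3 ^ 6)]
      exact Nat.mul_mod_right 3 _
    · rintro ⟨a, ha⟩
      ext
      have h1 : 3 * (a.val / 3) = a.val := by omega
      simp only [h1]
      exact ZMod.natCast_zmod_val a
    · rintro ⟨k, hk⟩
      ext
      have h1 : 3 * k < 3 ^ 6 := by norm_num; omega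
      simp only [ZMod.val_natCast, Nat.mod_eq_of_lt h1]
      omega
  rw [Nat.card_congr (e0.trans e), Nat.card_eq_fintype_card, Fintype.card_fin]

/-- Among the `3¹² = 531441` residue pairs `(a,b)` mod `3⁶`, exactly `177147 = 3¹¹`
satisfy both `3⁴ ∣ A(a,b)` and `3⁶ ∣ B(a,b)`; these are precisely the pairs with
`3 ∣ a`.  Hence the local density `𝔡₃` equals `2/3`. -/
theorem stmt16 :
    Nat.card {p : ZMod (3 ^ 6) × ZMod (3 ^ 6) //
        (3 ^ 4 : ZMod (3 ^ 6)) ∣ Aent p.1 p.2 ∧ Bent p.1 p.2 = 0} = 177147 ∧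
    (∀ p : ZMod (3 ^ 6) × ZMod (3 ^ 6),
        ((3 ^ 4 : ZMod (3 ^ 6)) ∣ Aent p.1 p.2 ∧ Bent p.1 p.2 = 0) ↔
          (3 : ZMod (3 ^ 6)) ∣ p.1) ∧
    1 - (Nat.card {p : ZMod (3 ^ 6) × ZMod (3 ^ 6) //
        (3 ^ 4 : ZMod (3 ^ 6)) ∣ Aent p.1 p.2 ∧ Bent p.1 p.2 = 0} : ℝ) / 531441
      = 2 / 3 := by
  have hcard : Nat.card {p : ZMod (3 ^ 6) × ZMod (3 ^ 6) //
      (3 ^ 4 : ZMod (3 ^ 6)) ∣ Aent p.1 p.2 ∧ Bent p.1 p.2 = 0} = 177147 := by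
    have e1 : {p : ZMod (3 ^ 6) × ZMod (3 ^ 6) //
        (3 ^ 4 : ZMod (3 ^ 6)) ∣ Aent p.1 p.2 ∧ Bent p.1 p.2 = 0} ≃
        {p : ZMod (3 ^ 6) × ZMod (3 ^ 6) // (3 : ZMod (3 ^ 6)) ∣ p.1} :=
      Equiv.subtypeEquivRight fun p => key p
    have e2 : {p : ZMod (3 ^ 6) × ZMod (3 ^ 6) // (3 : ZMod (3 ^ 6)) ∣ p.1} ≃
        {a : ZMod (3 ^ 6) // (3 : ZMod (3 ^ 6)) ∣ a} × ZMod (3 ^ 6) :=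
      Equiv.prodSubtypeFstEquivSubtypeProd
    rw [Nat.card_congr (e1.trans e2), Nat.card_prod, card_a]
    have : Nat.card (ZMod (3 ^ 6)) = 729 := by
      rw [Nat.card_eq_fintype_card, ZMod.card]
      norm_num
    rw [this]
  refine ⟨hcard, key, ?_⟩
  rw [hcard]
  norm_num
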